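/- arXiv:1009.2943 — 2 statements merged into one kernel-verified Lean document; each statement's English description precedes it below -/
import Mathlib

section
/- Let $k:[0,L]\times\mathbb{R}\to\mathbb{R}$ be such that $k(x,y)$ is 1-periodic in $y$, satisfies $0<\alpha\le k(x,y)\le\beta$, and $x\mapsto k(x,y)$ is Lipschitz uniformly in $y$. Let $G:[0,L]\to\mathbb{R}$ be Lipschitz. Define $k_0(x)=(\int_0^1 k(x,y)^{-1}dy)^{-1}$. Then there is a constant $C$ such that for all $\epsilon\in(0,1]$, $\left|\int_0^L k(z,z/\epsilon)^{-1}G(z)\,dz - \int_0^L k_0(z)^{-1}G(z)\,dz\right|\le C\epsilon$. -/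
/-!
Write `g(x, y) = (a(x, y) - ∫₀¹ a(x, t) dt) G(x)` with `a = 1/k`: it is 1-periodic with zero mean
in `y` and Lipschitz in `x`. On a cell `[x₀, x₀ + ε]`, `g(z, z/ε)` differs from the frozen
`g(x₀, z/ε)` by `O(ε)`, and the frozen integrand integrates to zero over the full period, so each
cell contributes `O(ε²)`. The `⌊L/ε⌋` full cells then give `O(ε)`, and so does the leftover piece,
on which `g` is merely bounded.
-/

open Set Function MeasureTheory intervalIntegral
open scoped NNReal

lemma LipschitzOnWith.mul_of_norm_le {X R : Type*} [PseudoMetricSpace X] [SeminormedRing R]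
    {f g : X → R} {s : Set X} {Kf Kg Mf Mg : ℝ≥0}
    (hf : LipschitzOnWith Kf f s) (hg : LipschitzOnWith Kg g s)
    (hfM : ∀ x ∈ s, ‖f x‖ ≤ Mf) (hgM : ∀ x ∈ s, ‖g x‖ ≤ Mg) :
    LipschitzOnWith (Mf * Kg + Kf * Mg) (fun x ↦ f x * g x) s := by
  refine LipschitzOnWith.of_dist_le_mul fun x hx y hy ↦ ?_
  have hfxy := hf.dist_le_mul x hx y hy
  have hgxy := hg.dist_le_mul x hx y hy
  rw [dist_eq_norm] at hfxy hgxy ⊢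
  calc ‖f x * g x - f y * g y‖ = ‖f x * (g x - g y) + (f x - f y) * g y‖ := by noncomm_ring
    _ ≤ ‖f x‖ * ‖g x - g y‖ + ‖f x - f y‖ * ‖g y‖ :=
      (norm_add_le _ _).trans (add_le_add (norm_mul_le _ _) (norm_mul_le _ _))
    _ ≤ Mf * (Kg * dist x y) + Kf * dist x y * Mg := by
      gcongr
      exacts [hfM x hx, hgM y hy]
    _ = ↑(Mf * Kg + Kf * Mg) * dist x y := by push_cast; ring

lemma LipschitzOnWith.inv_of_le {X : Type*} [PseudoMetricSpace X] {f : X → ℝ} {s : Set X}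
    {K α : ℝ≥0} (hα : 0 < α) (hf : LipschitzOnWith K f s) (hfα : ∀ x ∈ s, α ≤ f x) :
    LipschitzOnWith (K / α ^ 2) (fun x ↦ (f x)⁻¹) s := by
  refine LipschitzOnWith.of_dist_le_mul fun x hx y hy ↦ ?_
  have hx0 : 0 < f x := (NNReal.coe_pos.2 hα).trans_le (hfα x hx)
  have hy0 : 0 < f y := (NNReal.coe_pos.2 hα).trans_le (hfα y hy)
  have hαxy : (α : ℝ) ^ 2 ≤ f x * f y := by
    rw [sq]; exact mul_le_mul (hfα x hx) (hfα y hy) α.coe_nonneg hx0.le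
  rw [Real.dist_eq, inv_sub_inv hx0.ne' hy0.ne', abs_div, abs_of_pos (mul_pos hx0 hy0),
    ← Real.dist_eq, dist_comm, NNReal.coe_div, NNReal.coe_pow, div_mul_eq_mul_div]
  exact div_le_div₀ (by positivity) (hf.dist_le_mul x hx y hy) (by positivity) hαxy

lemma LipschitzOnWith.intervalIntegral {X : Type*} [PseudoMetricSpace X] {f : X → ℝ → ℝ}
    {s : Set X} {K : ℝ≥0} {a b : ℝ} (hf : ∀ t, LipschitzOnWith K (f · t) s)
    (hint : ∀ x ∈ s, IntervalIntegrable (f x) volume a b) :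
    LipschitzOnWith (K * ‖b - a‖₊) (fun x ↦ ∫ t in a..b, f x t) s := by
  refine LipschitzOnWith.of_dist_le_mul fun x hx y hy ↦ ?_
  rw [dist_eq_norm, ← integral_sub (hint x hx) (hint y hy), NNReal.coe_mul, coe_nnnorm,
    Real.norm_eq_abs (b - a), mul_right_comm]
  exact norm_integral_le_of_norm_le_const fun t _ ↦ by
    rw [← dist_eq_norm]; exact (hf t).dist_le_mul x hx y hy

lemma Function.Periodic.integral_comp_div_eq_zero {h : ℝ → ℝ} (hper : Periodic h 1)
    (hmean : ∫ y in (0 : ℝ)..1, h y = 0) (a : ℝ) {ε : ℝ} (hε : ε ≠ 0) :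
    ∫ z in a..a + ε, h (z / ε) = 0 := by
  rw [integral_comp_div h hε, add_div, div_self hε, hper.intervalIntegral_add_eq (a / ε) 0,
    zero_add, hmean, smul_zero]

lemma abs_integral_natCast_mul_le {F : ℝ → ℝ} {ε C : ℝ} {N : ℕ}
    (hint : ∀ j < N, IntervalIntegrable F volume (j * ε) (j * ε + ε))
    (hcell : ∀ j < N, |∫ z in j * ε..j * ε + ε, F z| ≤ C) :
    |∫ z in 0..N * ε, F z| ≤ N * C := by
  have hsum := sum_integral_adjacent_intervals (f := F) (μ := volume)
    (a := fun j : ℕ ↦ (j : ℝ) * ε) (n := N) fun j hj ↦ by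
      simpa only [Nat.cast_succ, add_one_mul] using hint j hj
  simp only [Nat.cast_zero, zero_mul, Nat.cast_succ, add_one_mul] at hsum
  rw [← hsum]
  calc |∑ j ∈ Finset.range N, ∫ z in j * ε..j * ε + ε, F z|
      ≤ ∑ j ∈ Finset.range N, C :=
        (Finset.abs_sum_le_sum_abs _ _).trans <| Finset.sum_le_sum fun j hj ↦
          hcell j (Finset.mem_range.1 hj)
    _ = N * C := by rw [Finset.sum_const, Finset.card_range, nsmul_eq_mul]

lemma abs_integral_le_of_abs_integral_cell_le {F : ℝ → ℝ} {L ε C M : ℝ} (hL : 0 ≤ L)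
    (hε : 0 < ε) (hC : 0 ≤ C) (hF : IntervalIntegrable F volume 0 L)
    (hcell : ∀ a, 0 ≤ a → a + ε ≤ L → |∫ z in a..a + ε, F z| ≤ C * ε ^ 2)
    (hM : ∀ z ∈ Icc 0 L, |F z| ≤ M) :
    |∫ z in 0..L, F z| ≤ (C * L + M) * ε := by
  set N := ⌊L / ε⌋₊
  have hNL : N * ε ≤ L := (le_div_iff₀ hε).1 (Nat.floor_le (div_nonneg hL hε.le))
  have hLN : L < (N + 1) * ε := (div_lt_iff₀ hε).1 (Nat.lt_floor_add_one _)
  have hint : ∀ c d, 0 ≤ c → c ≤ d → d ≤ L → IntervalIntegrable F volume c d :=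
    fun c d hc hcd hd ↦ hF.mono_set <| by
      rw [uIcc_of_le hcd, uIcc_of_le hL]; exact Icc_subset_Icc hc hd
  have hjL : ∀ j < N, (j : ℝ) * ε + ε ≤ L := fun j hj ↦ by
    have : (j : ℝ) + 1 ≤ N := by exact_mod_cast hj
    nlinarith
  have hcells : |∫ z in 0..N * ε, F z| ≤ C * L * ε :=
    calc |∫ z in 0..N * ε, F z| ≤ N * (C * ε ^ 2) :=
          abs_integral_natCast_mul_le
            (fun j hj ↦ hint _ _ (by positivity) (by linarith) (hjL j hj))
            fun j hj ↦ hcell _ (by positivity) (hjL j hj)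
      _ = C * ε * (N * ε) := by ring
      _ ≤ C * ε * L := by gcongr
      _ = C * L * ε := by ring
  have htail : |∫ z in N * ε..L, F z| ≤ M * ε := by
    have hM0 : 0 ≤ M := (abs_nonneg _).trans (hM 0 ⟨le_rfl, hL⟩)
    have hbound : ∀ z ∈ uIoc (N * ε) L, ‖F z‖ ≤ M := fun z hz ↦ by
      rw [uIoc_of_le hNL] at hz
      exact hM z ⟨(by positivity : (0 : ℝ) ≤ N * ε).trans hz.1.le, hz.2⟩
    calc |∫ z in N * ε..L, F z| ≤ M * |L - N * ε| :=
          intervalIntegral.norm_integral_le_of_norm_le_const hbound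
      _ ≤ M * ε := by
          gcongr
          rw [abs_of_nonneg (sub_nonneg.2 hNL)]; linarith
  rw [← integral_add_adjacent_intervals (hint 0 _ le_rfl (by positivity) hNL)
    (hint _ L (by positivity) hNL le_rfl)]
  calc _ ≤ |∫ z in 0..N * ε, F z| + |∫ z in N * ε..L, F z| := abs_add_le _ _
    _ ≤ C * L * ε + M * ε := add_le_add hcells htail
    _ = (C * L + M) * ε := by ring

lemma abs_integral_oscillating_cell_le {g : ℝ → ℝ → ℝ} {L ε : ℝ} {K : ℝ≥0}
    (hg : ContinuousOn (uncurry g) (Icc 0 L ×ˢ univ)) (hper : ∀ x ∈ Icc 0 L, Periodic (g x) 1)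
    (hmean : ∀ x ∈ Icc 0 L, ∫ y in (0 : ℝ)..1, g x y = 0)
    (hLip : ∀ y, LipschitzOnWith K (g · y) (Icc 0 L))
    (hε : 0 < ε) {a : ℝ} (ha : 0 ≤ a) (haL : a + ε ≤ L) :
    |∫ z in a..a + ε, g z (z / ε)| ≤ K * ε ^ 2 := by
  have haε : a ≤ a + ε := by linarith
  have hcell : Icc a (a + ε) ⊆ Icc 0 L := Icc_subset_Icc ha haL
  have haL' : a ∈ Icc 0 L := hcell (left_mem_Icc.2 haε)
  have hosc : ContinuousOn (fun z ↦ g z (z / ε)) (Icc a (a + ε)) :=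
    hg.comp (continuousOn_id.prodMk (continuousOn_id.div_const ε)) fun _ hz ↦ ⟨hcell hz, trivial⟩
  have hfrozen : Continuous fun z ↦ g a (z / ε) :=
    hg.comp_continuous (continuous_const.prodMk (continuous_id.div_const ε))
      fun _ ↦ ⟨haL', trivial⟩
  have hbound : ∀ z ∈ uIoc a (a + ε), ‖g z (z / ε) - g a (z / ε)‖ ≤ K * ε := fun z hz ↦ by
    rw [uIoc_of_le haε] at hz
    calc ‖g z (z / ε) - g a (z / ε)‖ ≤ K * dist z a :=
          (hLip (z / ε)).dist_le_mul z (hcell (Ioc_subset_Icc_self hz)) a haL'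
      _ ≤ K * ε := by
          gcongr
          rw [Real.dist_eq, abs_of_pos (sub_pos.2 hz.1)]; linarith [hz.2]
  calc |∫ z in a..a + ε, g z (z / ε)| = |∫ z in a..a + ε, (g z (z / ε) - g a (z / ε))| := by
        rw [integral_sub (hosc.intervalIntegrable_of_Icc haε) (hfrozen.intervalIntegrable _ _),
          (hper a haL').integral_comp_div_eq_zero (hmean a haL') a hε.ne', sub_zero]
    _ ≤ K * ε * |a + ε - a| := intervalIntegral.norm_integral_le_of_norm_le_const hbound
    _ = K * ε ^ 2 := by rw [add_sub_cancel_left, abs_of_pos hε]; ring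

theorem abs_integral_oscillating_le {g : ℝ → ℝ → ℝ} {L ε M : ℝ} {K : ℝ≥0} (hL : 0 ≤ L)
    (hε : 0 < ε) (hg : ContinuousOn (uncurry g) (Icc 0 L ×ˢ univ))
    (hper : ∀ x ∈ Icc 0 L, Periodic (g x) 1)
    (hmean : ∀ x ∈ Icc 0 L, ∫ y in (0 : ℝ)..1, g x y = 0)
    (hLip : ∀ y, LipschitzOnWith K (g · y) (Icc 0 L)) (hM : ∀ x ∈ Icc 0 L, ∀ y, |g x y| ≤ M) :
    |∫ z in 0..L, g z (z / ε)| ≤ (K * L + M) * ε := by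
  refine abs_integral_le_of_abs_integral_cell_le hL hε K.coe_nonneg ?_
    (fun a ha haL ↦ abs_integral_oscillating_cell_le hg hper hmean hLip hε ha haL) fun z hz ↦ hM z hz _
  exact ContinuousOn.intervalIntegrable_of_Icc hL <|
    hg.comp (continuousOn_id.prodMk (continuousOn_id.div_const ε)) fun _ hz ↦ ⟨hz, trivial⟩

lemma abs_sub_intervalIntegral_le {f : ℝ → ℝ} {c : ℝ} (hf : ∀ t, |f t| ≤ c) (y : ℝ) :
    |f y - ∫ t in (0 : ℝ)..1, f t| ≤ 2 * c := by
  have hmean : |∫ t in (0 : ℝ)..1, f t| ≤ c := by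
    simpa using intervalIntegral.norm_integral_le_of_norm_le_const (a := 0) (b := 1) (f := f)
      fun t _ ↦ hf t
  linarith [abs_sub (f y) (∫ t in (0 : ℝ)..1, f t), hf y]

lemma exists_lipschitzOnWith_sub_intervalIntegral_mul {a : ℝ → ℝ → ℝ} {G : ℝ → ℝ} {s : Set ℝ}
    {c MG : ℝ} {Ka KG : ℝ≥0} (ha : ∀ x, Continuous (a x)) (hc : ∀ x y, |a x y| ≤ c)
    (hLip : ∀ y, LipschitzOnWith Ka (a · y) s) (hG : LipschitzOnWith KG G s)
    (hMG : ∀ x ∈ s, |G x| ≤ MG) :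
    ∃ K, ∀ y, LipschitzOnWith K (fun x ↦ (a x y - ∫ t in (0 : ℝ)..1, a x t) * G x) s :=
  ⟨_, fun y ↦ ((hLip y).sub (LipschitzOnWith.intervalIntegral hLip fun x _ ↦
    (ha x).intervalIntegrable 0 1)).mul_of_norm_le hG (Mf := (2 * c).toNNReal)
    (fun x _ ↦ (abs_sub_intervalIntegral_le (hc x) y).trans (Real.le_coe_toNNReal _))
    fun x hx ↦ (hMG x hx).trans (Real.le_coe_toNNReal MG)⟩

theorem exists_abs_integral_sub_integral_mean_le {a : ℝ → ℝ → ℝ} {G : ℝ → ℝ} {L c : ℝ}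
    {Ka KG : ℝ≥0} (hL : 0 ≤ L) (ha : Continuous (uncurry a)) (hper : ∀ x, Periodic (a x) 1)
    (hc : ∀ x y, |a x y| ≤ c) (hLip : ∀ y, LipschitzOnWith Ka (a · y) (Icc 0 L))
    (hG : LipschitzOnWith KG G (Icc 0 L)) :
    ∃ C, ∀ ε, 0 < ε → |(∫ z in 0..L, a z (z / ε) * G z) -
      ∫ z in 0..L, (∫ y in (0 : ℝ)..1, a z y) * G z| ≤ C * ε := by
  set m : ℝ → ℝ := fun x ↦ ∫ y in (0 : ℝ)..1, a x y
  set g : ℝ → ℝ → ℝ := fun x y ↦ (a x y - m x) * G x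
  have hax : ∀ x, Continuous (a x) := fun x ↦ ha.comp (continuous_const.prodMk continuous_id)
  have hm : Continuous m := continuous_parametric_intervalIntegral_of_continuous' ha 0 1
  have hG' : ContinuousOn G (uIcc 0 L) := by rw [uIcc_of_le hL]; exact hG.continuousOn
  obtain ⟨MG, hMG⟩ := (isCompact_Icc (a := 0) (b := L)).exists_bound_of_continuousOn
    hG.continuousOn
  obtain ⟨K, hgLip⟩ := exists_lipschitzOnWith_sub_intervalIntegral_mul hax hc hLip hG hMG
  have hgM : ∀ x ∈ Icc 0 L, ∀ y, |g x y| ≤ 2 * c * MG := fun x hx y ↦ by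
    rw [abs_mul]
    exact mul_le_mul (abs_sub_intervalIntegral_le (hc x) y) (hMG x hx) (abs_nonneg _)
      ((abs_nonneg _).trans (abs_sub_intervalIntegral_le (hc x) y))
  have hgcont : ContinuousOn (uncurry g) (Icc 0 L ×ˢ univ) :=
    (ha.sub (hm.comp continuous_fst)).continuousOn.mul
      (hG.continuousOn.comp continuousOn_fst fun _ hq ↦ hq.1)
  have hgper : ∀ x ∈ Icc 0 L, Periodic (g x) 1 := fun x _ y ↦ by simp only [g, hper x y]
  have hgmean : ∀ x ∈ Icc 0 L, ∫ y in (0 : ℝ)..1, g x y = 0 := fun x _ ↦ by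
    rw [intervalIntegral.integral_mul_const, integral_sub ((hax x).intervalIntegrable 0 1)
      intervalIntegrable_const, intervalIntegral.integral_const, sub_zero, one_smul, sub_self,
      zero_mul]
  refine ⟨K * L + 2 * c * MG, fun ε hε ↦ ?_⟩
  have hosc : Continuous fun z ↦ a z (z / ε) :=
    ha.comp (continuous_id.prodMk (continuous_id.div_const ε))
  have h₁ : IntervalIntegrable (fun z ↦ a z (z / ε) * G z) volume 0 L :=
    (hosc.continuousOn.mul hG').intervalIntegrable
  have h₂ : IntervalIntegrable (fun z ↦ (∫ y in (0 : ℝ)..1, a z y) * G z) volume 0 L :=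
    (hm.continuousOn.mul hG').intervalIntegrable
  rw [← integral_sub h₁ h₂]
  simpa only [g, m, sub_mul] using abs_integral_oscillating_le hL hε hgcont hgper hgmean hgLip hgM

theorem oscillatory_average_rate_general (L : ℝ) (hL : 0 < L) (k : ℝ → ℝ → ℝ)
    (α Kk KG : ℝ) (hα : 0 < α)
    (hcont : Continuous fun q : ℝ × ℝ => k q.1 q.2)
    (hper : ∀ x y, k x (y + 1) = k x y)
    (hlb : ∀ x y, α ≤ k x y)
    (hLip : ∀ y, LipschitzOnWith (Real.toNNReal Kk) (fun x => k x y) (Set.Icc 0 L))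
    (G : ℝ → ℝ) (hG : LipschitzOnWith (Real.toNNReal KG) G (Set.Icc 0 L))
    (k₀ : ℝ → ℝ) (hk₀ : ∀ x, k₀ x = (∫ y in (0:ℝ)..1, (k x y)⁻¹)⁻¹) :
    ∃ C : ℝ, ∀ ε ∈ Set.Ioc (0:ℝ) 1,
      |(∫ z in (0:ℝ)..L, (k z (z / ε))⁻¹ * G z) -
        ∫ z in (0:ℝ)..L, (k₀ z)⁻¹ * G z| ≤ C * ε := by
  have hkpos : ∀ x y, 0 < k x y := fun x y ↦ hα.trans_le (hlb x y)
  have hlb' : ∀ x y, (α.toNNReal : ℝ) ≤ k x y := fun x y ↦ by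
    rw [Real.coe_toNNReal _ hα.le]; exact hlb x y
  obtain ⟨C, hC⟩ := exists_abs_integral_sub_integral_mean_le (a := fun x y ↦ (k x y)⁻¹) hL.le
    (hcont.inv₀ fun q ↦ (hkpos q.1 q.2).ne') (fun x y ↦ by simp only [hper])
    (fun x y ↦ by rw [abs_inv, abs_of_pos (hkpos x y)]; exact inv_anti₀ hα (hlb x y))
    (fun y ↦ (hLip y).inv_of_le (Real.toNNReal_pos.2 hα) fun x _ ↦ hlb' x y) hG
  refine ⟨C, fun ε hε ↦ ?_⟩
  simpa only [hk₀, inv_inv] using hC ε hε.1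

/-- Averaging lemma: oscillatory integrals of `k(z, z/ε)⁻¹` against a Lipschitz
function converge at rate `O(ε)` to the integral against the harmonic mean. -/
theorem oscillatory_average_rate (L : ℝ) (hL : 0 < L) (k : ℝ → ℝ → ℝ)
    (α β Kk KG : ℝ) (hα : 0 < α)
    (hcont : Continuous fun q : ℝ × ℝ => k q.1 q.2)
    (hper : ∀ x y, k x (y + 1) = k x y)
    (hlb : ∀ x y, α ≤ k x y) (hub : ∀ x y, k x y ≤ β)
    (hLip : ∀ y, LipschitzOnWith (Real.toNNReal Kk) (fun x => k x y) (Set.Icc 0 L))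
    (G : ℝ → ℝ) (hG : LipschitzOnWith (Real.toNNReal KG) G (Set.Icc 0 L))
    (k₀ : ℝ → ℝ) (hk₀ : ∀ x, k₀ x = (∫ y in (0:ℝ)..1, (k x y)⁻¹)⁻¹) :
    ∃ C : ℝ, ∀ ε ∈ Set.Ioc (0:ℝ) 1,
      |(∫ z in (0:ℝ)..L, (k z (z / ε))⁻¹ * G z) -
        ∫ z in (0:ℝ)..L, (k₀ z)⁻¹ * G z| ≤ C * ε :=
  oscillatory_average_rate_general L hL k α Kk KG hα hcont hper hlb hLip G hG k₀ hk₀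
end

section
/- Let $k:[0,L]\times\mathbb{R}\to\mathbb{R}$ be 1-periodic in the second argument, smooth, with $0<\alpha\le k\le\beta$, let $f$ be continuous with antiderivative $F$, and let $p_\epsilon$ solve $-\frac{d}{dx}(k(x,x/\epsilon)p_\epsilon')=f$ on $(0,L)$ with $p_\epsilon(0)=p_\epsilon(L)=0$, and $p_0$ solve the same problem with coefficient $k_0(x)=(\int_0^1 k(x,y)^{-1}dy)^{-1}$. Then the fluxes $v_\epsilon(x)=k(x,x/\epsilon)p_\epsilon'(x)$ and $v_0(x)=k_0(x)p_0'(x)$ satisfy $\|v_\epsilon - v_0\|_{L^\infty(0,L)} = |c^\epsilon - c|$ where $c^\epsilon = \frac{\int_0^L k(z,z/\epsilon)^{-1}F(z)dz}{\int_0^L k(z,z/\epsilon)^{-1}dz}$ and $c = \frac{\int_0^L k_0(z)^{-1}F(z)dz}{\int_0^L k_0(z)^{-1}dz}$, and hence $\|v_\epsilon - v_0\|_{L^\infty}\to 0$ as $\epsilon\to 0$. -/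
open intervalIntegral MeasureTheory Set

lemma aux_solve (L : ℝ) (hL : 0 < L) (K : ℝ → ℝ) (α : ℝ) (hα : 0 < α)
    (hKc : ContinuousOn K (Set.Icc 0 L)) (hKlb : ∀ x, α ≤ K x)
    (f F : ℝ → ℝ) (hF : ∀ x, HasDerivAt F (f x) x)
    (q q' : ℝ → ℝ) (hq : ∀ x, HasDerivAt q (q' x) x)
    (hflux : ∀ x, HasDerivAt (fun z => K z * q' z) (-f x) x)
    (h0 : q 0 = 0) (hLval : q L = 0) :
    ∀ x, K x * q' x =
      (∫ z in (0:ℝ)..L, (K z)⁻¹ * F z) / (∫ z in (0:ℝ)..L, (K z)⁻¹) - F x := by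
  have hKne : ∀ x, K x ≠ 0 := fun x => (lt_of_lt_of_le hα (hKlb x)).ne'
  set v : ℝ → ℝ := fun z => K z * q' z with hv
  have hd : ∀ x, HasDerivAt (fun z => v z + F z) 0 x := by
    intro x
    have := (hflux x).add (hF x)
    rw [neg_add_cancel] at this; exact this
  have hconst : ∀ x y : ℝ, v x + F x = v y + F y := by
    have := is_const_of_deriv_eq_zero (f := fun z => v z + F z)
      (fun x => (hd x).differentiableAt) (fun x => (hd x).deriv)
    exact this
  set C : ℝ := v 0 + F 0 with hC
  have hvx : ∀ x, v x = C - F x := fun x => by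
    have := hconst x 0; rw [hC]; linarith
  have hq'x : ∀ x, q' x = (C - F x) * (K x)⁻¹ := by
    intro x
    have h1 : K x * q' x = C - F x := hvx x
    rw [← h1, mul_comm (K x) (q' x), mul_assoc, mul_inv_cancel₀ (hKne x), mul_one]
  have hFcont : Continuous F := by
    rw [continuous_iff_continuousAt]; exact fun x => (hF x).continuousAt
  have hKinv : ContinuousOn (fun z => (K z)⁻¹) (Set.Icc 0 L) :=
    hKc.inv₀ (fun x _ => hKne x)
  have huIcc : Set.uIcc (0:ℝ) L = Set.Icc 0 L := Set.uIcc_of_le hL.le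
  have hint1 : IntervalIntegrable (fun z => (K z)⁻¹) volume 0 L :=
    (huIcc ▸ hKinv).intervalIntegrable
  have hint2 : IntervalIntegrable (fun z => (K z)⁻¹ * F z) volume 0 L :=
    (huIcc ▸ (hKinv.mul hFcont.continuousOn)).intervalIntegrable
  have hintq' : IntervalIntegrable q' volume 0 L := by
    have : ContinuousOn q' (Set.Icc 0 L) := by
      have : ContinuousOn (fun x => (C - F x) * (K x)⁻¹) (Set.Icc 0 L) :=
        ((continuous_const.sub hFcont).continuousOn).mul hKinv
      exact this.congr (fun x _ => hq'x x)
    exact (huIcc ▸ this).intervalIntegrable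
  have hzero : (∫ z in (0:ℝ)..L, q' z) = 0 := by
    rw [integral_eq_sub_of_hasDerivAt (fun x _ => hq x) hintq', h0, hLval, sub_zero]
  have hexp : (∫ z in (0:ℝ)..L, q' z)
      = C * (∫ z in (0:ℝ)..L, (K z)⁻¹) - ∫ z in (0:ℝ)..L, (K z)⁻¹ * F z := by
    have : ∀ z, q' z = C * (K z)⁻¹ - (K z)⁻¹ * F z := by
      intro z; rw [hq'x z]; ring
    rw [intervalIntegral.integral_congr (fun z _ => this z),
      intervalIntegral.integral_sub (hint1.const_mul C) hint2,
      intervalIntegral.integral_const_mul]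
  have hpos : 0 < ∫ z in (0:ℝ)..L, (K z)⁻¹ := by
    apply intervalIntegral.intervalIntegral_pos_of_pos_on hint1 _ hL
    intro x _
    exact inv_pos.mpr (lt_of_lt_of_le hα (hKlb x))
  intro x
  have hvv : K x * q' x = C - F x := hvx x
  rw [hvv]
  congr 1
  have h2 : C * (∫ z in (0:ℝ)..L, (K z)⁻¹) = ∫ z in (0:ℝ)..L, (K z)⁻¹ * F z := by
    rw [hexp] at hzero; linarith
  rw [eq_div_iff hpos.ne']
  exact h2

open intervalIntegral MeasureTheory Set Filter

lemma aux_twoscale (L : ℝ) (hL : 0 < L) (h : ℝ → ℝ → ℝ) (M C : ℝ)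
    (hM : 0 ≤ M) (hC0 : 0 ≤ C)
    (hcont : Continuous fun q : ℝ × ℝ => h q.1 q.2)
    (hper : ∀ x y, h x (y + 1) = h x y)
    (hbound : ∀ x y, |h x y| ≤ C)
    (hlip : ∀ y : ℝ, ∀ x ∈ Set.Icc (0:ℝ) L, ∀ x' ∈ Set.Icc (0:ℝ) L,
      |h x y - h x' y| ≤ M * |x - x'|)
    (g g' : ℝ → ℝ) (hg : ∀ x, HasDerivAt g (g' x) x) (hg'c : Continuous g') :
    Filter.Tendsto (fun ε => ∫ x in (0:ℝ)..L, g x * h x (x / ε))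
      (nhdsWithin 0 (Set.Ioi 0))
      (nhds (∫ x in (0:ℝ)..L, g x * ∫ y in (0:ℝ)..1, h x y)) := by
  have hgc : Continuous g := by
    rw [continuous_iff_continuousAt]; exact fun x => (hg x).continuousAt
  -- continuity of slices
  have hslice : ∀ a : ℝ, Continuous (h a) := fun a =>
    hcont.comp (Continuous.prodMk_right a)
  set hbar : ℝ → ℝ := fun x => ∫ y in (0:ℝ)..1, h x y with hbar_def
  have hbarc : Continuous hbar :=
    intervalIntegral.continuous_parametric_intervalIntegral_of_continuous' hcont 0 1
  have hbarbound : ∀ x, |hbar x| ≤ C := by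
    intro x
    have := intervalIntegral.norm_integral_le_of_norm_le_const
      (a := 0) (b := 1) (C := C) (f := h x) (fun y _ => hbound x y)
    simpa using this
  have hbarlip : ∀ x ∈ Set.Icc (0:ℝ) L, ∀ x' ∈ Set.Icc (0:ℝ) L,
      |hbar x - hbar x'| ≤ M * |x - x'| := by
    intro x hx x' hx'
    have hsub : hbar x - hbar x' = ∫ y in (0:ℝ)..1, (h x y - h x' y) := by
      rw [intervalIntegral.integral_sub ((hslice x).intervalIntegrable 0 1)
        ((hslice x').intervalIntegrable 0 1)]
    rw [hsub]
    have := intervalIntegral.norm_integral_le_of_norm_le_const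
      (a := 0) (b := 1) (C := M * |x - x'|) (f := fun y => h x y - h x' y)
      (fun y _ => hlip y x hx x' hx')
    simpa using this
  -- bounds for g and g'
  obtain ⟨G, hG⟩ := isCompact_Icc.exists_bound_of_continuousOn
    (hgc.continuousOn : ContinuousOn g (Set.Icc (0:ℝ) L))
  obtain ⟨G', hG'⟩ := isCompact_Icc.exists_bound_of_continuousOn
    (hg'c.continuousOn : ContinuousOn g' (Set.Icc (0:ℝ) L))
  have hGabs : ∀ x ∈ Set.Icc (0:ℝ) L, |g x| ≤ G := fun x hx => hG x hx
  have hG'abs : ∀ x ∈ Set.Icc (0:ℝ) L, |g' x| ≤ G' := fun x hx => hG' x hx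
  have hG0 : 0 ≤ G := le_trans (abs_nonneg _) (hGabs 0 ⟨le_refl _, hL.le⟩)
  have hG'0 : 0 ≤ G' := le_trans (abs_nonneg _) (hG'abs 0 ⟨le_refl _, hL.le⟩)
  -- the primitive Q
  set Q : ℝ → ℝ → ℝ := fun a y => ∫ s in (0:ℝ)..y, (h a s - hbar a) with hQ_def
  have hslice' : ∀ a, Continuous (fun s => h a s - hbar a) := fun a =>
    (hslice a).sub continuous_const
  have hQderiv : ∀ a y, HasDerivAt (Q a) (h a y - hbar a) y := by
    intro a y
    exact intervalIntegral.integral_hasDerivAt_right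
      ((hslice' a).intervalIntegrable 0 y)
      ((hslice' a).stronglyMeasurableAtFilter volume (nhds y))
      (hslice' a).continuousAt
  have hQper : ∀ a, Function.Periodic (Q a) 1 := by
    intro a y
    have hadd : Q a y + (∫ s in y..(y+1), (h a s - hbar a)) = Q a (y + 1) :=
      intervalIntegral.integral_add_adjacent_intervals
        ((hslice' a).intervalIntegrable 0 y) ((hslice' a).intervalIntegrable y (y+1))
    have hper' : Function.Periodic (fun s => h a s - hbar a) 1 := by
      intro s; simp [hper a s]
    have hval : (∫ s in y..(y+1), (h a s - hbar a))
        = ∫ s in (0:ℝ)..(0+1), (h a s - hbar a) := hper'.intervalIntegral_add_eq y 0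
    have hzero : (∫ s in (0:ℝ)..(0+1), (h a s - hbar a)) = 0 := by
      rw [zero_add, intervalIntegral.integral_sub ((hslice a).intervalIntegrable 0 1)
        (intervalIntegrable_const)]
      simp [hbar_def]
    rw [← hadd, hval, hzero, add_zero]
  have hQbound : ∀ a y, |Q a y| ≤ 2 * C := by
    intro a y
    have hfr : Q a (Int.fract y) = Q a y := by
      have h5 := (hQper a).sub_int_mul_eq (x := y) ⌊y⌋
      rw [mul_one] at h5
      rw [← Int.self_sub_floor y]
      exact h5
    rw [← hfr]
    have hb : ∀ s ∈ Set.uIoc (0:ℝ) (Int.fract y), |h a s - hbar a| ≤ C + C := by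
      intro s _
      calc |h a s - hbar a| ≤ |h a s| + |hbar a| := abs_sub _ _
        _ ≤ C + C := add_le_add (hbound a s) (hbarbound a)
    have := intervalIntegral.norm_integral_le_of_norm_le_const
      (a := 0) (b := Int.fract y) (C := C + C) (f := fun s => h a s - hbar a) hb
    have habs : |Int.fract y - 0| ≤ 1 := by
      rw [sub_zero, abs_of_nonneg (Int.fract_nonneg y)]
      exact (Int.fract_lt_one y).le
    calc |Q a (Int.fract y)| ≤ (C + C) * |Int.fract y - 0| := this
      _ ≤ (C + C) * 1 := by
          apply mul_le_mul_of_nonneg_left habs (by linarith)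
      _ = 2 * C := by ring
  -- the key per-interval estimate
  have key : ∀ ε : ℝ, 0 < ε → ∀ a b : ℝ, 0 ≤ a → a ≤ b → b ≤ L →
      |(∫ x in a..b, g x * h x (x / ε)) - ∫ x in a..b, g x * hbar x| ≤
        2 * (G * (M * (b - a))) * (b - a) + ε * (2 * C) * (2 * G + G' * (b - a)) := by
    intro ε hε a b ha hab hbL
    have haI : a ∈ Set.Icc (0:ℝ) L := ⟨ha, le_trans hab hbL⟩
    have hbI : b ∈ Set.Icc (0:ℝ) L := ⟨le_trans ha hab, hbL⟩
    have hsubI : Set.Icc a b ⊆ Set.Icc (0:ℝ) L := Set.Icc_subset_Icc ha hbL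
    have hIoc : Set.uIoc a b ⊆ Set.Icc a b := by
      rw [Set.uIoc_of_le hab]; exact Set.Ioc_subset_Icc_self
    have hεcont : Continuous (fun x => h x (x / ε)) :=
      hcont.comp (continuous_id.prodMk (continuous_id.div_const ε))
    -- the three pieces
    set p1 : ℝ → ℝ := fun x => g x * (h x (x / ε) - h a (x / ε)) with hp1
    set p2 : ℝ → ℝ := fun x => g x * (h a (x / ε) - hbar a) with hp2
    set p3 : ℝ → ℝ := fun x => g x * (hbar a - hbar x) with hp3
    have hεslice : Continuous (fun x => h a (x / ε)) :=
      (hslice a).comp (continuous_id.div_const ε)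
    have hip1 : IntervalIntegrable p1 volume a b :=
      ((hgc.mul (hεcont.sub hεslice))).intervalIntegrable a b
    have hip2 : IntervalIntegrable p2 volume a b :=
      ((hgc.mul (hεslice.sub continuous_const))).intervalIntegrable a b
    have hip3 : IntervalIntegrable p3 volume a b :=
      ((hgc.mul (continuous_const.sub hbarc))).intervalIntegrable a b
    have hdec : (∫ x in a..b, g x * h x (x / ε)) - (∫ x in a..b, g x * hbar x)
        = (∫ x in a..b, p1 x) + (∫ x in a..b, p2 x) + (∫ x in a..b, p3 x) := by
      rw [← intervalIntegral.integral_add hip1 hip2,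
        ← intervalIntegral.integral_add (hip1.add hip2) hip3,
        ← intervalIntegral.integral_sub (f := fun x => g x * h x (x / ε))
          (g := fun x => g x * hbar x) ((hgc.mul hεcont).intervalIntegrable a b)
          ((hgc.mul hbarc).intervalIntegrable a b)]
      apply intervalIntegral.integral_congr
      intro x _
      simp only [hp1, hp2, hp3]
      ring
    -- estimate p1
    have e1 : |∫ x in a..b, p1 x| ≤ (G * (M * (b - a))) * (b - a) := by
      have hb1 : ∀ x ∈ Set.uIoc a b, ‖p1 x‖ ≤ G * (M * (b - a)) := by
        intro x hx
        have hxI : x ∈ Set.Icc a b := hIoc hx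
        have hx0L : x ∈ Set.Icc (0:ℝ) L := hsubI hxI
        rw [Real.norm_eq_abs, hp1, abs_mul]
        apply mul_le_mul (hGabs x hx0L) _ (abs_nonneg _) hG0
        calc |h x (x / ε) - h a (x / ε)| ≤ M * |x - a| := hlip _ x hx0L a haI
          _ ≤ M * (b - a) := by
              apply mul_le_mul_of_nonneg_left _ hM
              rw [abs_of_nonneg (by linarith [hxI.1] : (0:ℝ) ≤ x - a)]
              linarith [hxI.2]
      have := intervalIntegral.norm_integral_le_of_norm_le_const hb1
      rw [abs_of_nonneg (by linarith : (0:ℝ) ≤ b - a)] at this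
      simpa using this
    -- estimate p3
    have e3 : |∫ x in a..b, p3 x| ≤ (G * (M * (b - a))) * (b - a) := by
      have hb3 : ∀ x ∈ Set.uIoc a b, ‖p3 x‖ ≤ G * (M * (b - a)) := by
        intro x hx
        have hxI : x ∈ Set.Icc a b := hIoc hx
        have hx0L : x ∈ Set.Icc (0:ℝ) L := hsubI hxI
        rw [Real.norm_eq_abs, hp3, abs_mul]
        apply mul_le_mul (hGabs x hx0L) _ (abs_nonneg _) hG0
        calc |hbar a - hbar x| ≤ M * |a - x| := hbarlip a haI x hx0L
          _ ≤ M * (b - a) := by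
              apply mul_le_mul_of_nonneg_left _ hM
              rw [abs_sub_comm, abs_of_nonneg (by linarith [hxI.1] : (0:ℝ) ≤ x - a)]
              linarith [hxI.2]
      have := intervalIntegral.norm_integral_le_of_norm_le_const hb3
      rw [abs_of_nonneg (by linarith : (0:ℝ) ≤ b - a)] at this
      simpa using this
    -- estimate p2 by integration by parts
    have e2 : |∫ x in a..b, p2 x| ≤ ε * (2 * C) * (2 * G + G' * (b - a)) := by
      set v : ℝ → ℝ := fun x => ε * Q a (x / ε) with hvdef
      have hvderiv : ∀ x : ℝ, HasDerivAt v (h a (x / ε) - hbar a) x := by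
        intro x
        have h1 : HasDerivAt (fun x : ℝ => x / ε) (1 / ε) x := by
          simpa using (hasDerivAt_id x).div_const ε
        have h2 : HasDerivAt (fun x : ℝ => Q a (x / ε))
            ((h a (x / ε) - hbar a) * (1 / ε)) x :=
          by have := HasDerivAt.comp x (hQderiv a (x / ε)) h1; exact this
        have h3 := h2.const_mul ε
        have e : ε * ((h a (x / ε) - hbar a) * (1 / ε)) = h a (x / ε) - hbar a := by
          rw [mul_comm ((h a (x / ε) - hbar a)) (1 / ε), ← mul_assoc, mul_one_div_cancel hε.ne',
            one_mul]
        rw [e] at h3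
        exact h3
      have hvbound : ∀ x : ℝ, |v x| ≤ ε * (2 * C) := by
        intro x
        rw [hvdef]
        simp only [abs_mul, abs_of_pos hε]
        exact mul_le_mul_of_nonneg_left (hQbound a (x / ε)) hε.le
      have hibp : (∫ x in a..b, g x * (h a (x / ε) - hbar a))
          = g b * v b - g a * v a - ∫ x in a..b, g' x * v x := by
        apply intervalIntegral.integral_mul_deriv_eq_deriv_mul
          (fun x _ => hg x) (fun x _ => hvderiv x)
          (hg'c.intervalIntegrable a b)
          ((hεslice.sub continuous_const).intervalIntegrable a b)
      have hvc : Continuous v := by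
        apply continuous_const.mul
        exact (intervalIntegral.continuous_primitive
          (fun c d => (hslice' a).intervalIntegrable c d) 0).comp
          (continuous_id.div_const ε)
      have hlast : |∫ x in a..b, g' x * v x| ≤ (G' * (ε * (2 * C))) * (b - a) := by
        have hb' : ∀ x ∈ Set.uIoc a b, ‖g' x * v x‖ ≤ G' * (ε * (2 * C)) := by
          intro x hx
          have hx0L : x ∈ Set.Icc (0:ℝ) L := hsubI (hIoc hx)
          rw [Real.norm_eq_abs, abs_mul]
          exact mul_le_mul (hG'abs x hx0L) (hvbound x) (abs_nonneg _) hG'0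
        have := intervalIntegral.norm_integral_le_of_norm_le_const hb'
        rw [abs_of_nonneg (by linarith : (0:ℝ) ≤ b - a)] at this
        simpa using this
      calc |∫ x in a..b, p2 x| = |g b * v b - g a * v a - ∫ x in a..b, g' x * v x| := by
            rw [hp2, hibp]
        _ ≤ |g b * v b| + |g a * v a| + |∫ x in a..b, g' x * v x| := by
            calc |g b * v b - g a * v a - ∫ x in a..b, g' x * v x|
                ≤ |g b * v b - g a * v a| + |∫ x in a..b, g' x * v x| := abs_sub _ _
              _ ≤ |g b * v b| + |g a * v a| + |∫ x in a..b, g' x * v x| := by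
                  have := abs_sub (g b * v b) (g a * v a)
                  linarith
        _ ≤ G * (ε * (2 * C)) + G * (ε * (2 * C)) + (G' * (ε * (2 * C))) * (b - a) := by
            have h1 : |g b * v b| ≤ G * (ε * (2 * C)) := by
              rw [abs_mul]
              exact mul_le_mul (hGabs b hbI) (hvbound b) (abs_nonneg _) hG0
            have h2 : |g a * v a| ≤ G * (ε * (2 * C)) := by
              rw [abs_mul]
              exact mul_le_mul (hGabs a haI) (hvbound a) (abs_nonneg _) hG0
            linarith [hlast]
        _ ≤ ε * (2 * C) * (2 * G + G' * (b - a)) := by ring_nf; nlinarith [hε.le, hC0]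
    calc |(∫ x in a..b, g x * h x (x / ε)) - ∫ x in a..b, g x * hbar x|
        = |(∫ x in a..b, p1 x) + (∫ x in a..b, p2 x) + (∫ x in a..b, p3 x)| := by rw [hdec]
      _ ≤ |∫ x in a..b, p1 x| + |∫ x in a..b, p2 x| + |∫ x in a..b, p3 x| := abs_add_three _ _ _
      _ ≤ 2 * (G * (M * (b - a))) * (b - a) + ε * (2 * C) * (2 * G + G' * (b - a)) := by
          linarith [e1, e2, e3]
  -- global estimate via equipartition
  have glob : ∀ N : ℕ, 0 < N → ∀ ε : ℝ, 0 < ε →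
      |(∫ x in (0:ℝ)..L, g x * h x (x / ε)) - ∫ x in (0:ℝ)..L, g x * hbar x| ≤
        2 * G * M * L ^ 2 / N + ε * ((N : ℝ) * ((2 * C) * (2 * G + G' * L))) := by
    intro N hN ε hε
    have hNR : (0:ℝ) < N := by exact_mod_cast hN
    set w : ℝ := L / N with hw
    have hw0 : 0 < w := div_pos hL hNR
    have hwL : w ≤ L := by
      rw [hw]
      apply div_le_self hL.le
      exact_mod_cast hN
    set aa : ℕ → ℝ := fun i => i * w with haa
    have haa0 : aa 0 = 0 := by simp [haa]
    have haaN : aa N = L := by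
      rw [haa]; field_simp [hw]; rw [hw]; field_simp [hNR.ne']
    have hstep : ∀ i : ℕ, aa (i + 1) - aa i = w := by
      intro i; simp only [haa]; push_cast; ring
    have hab : ∀ i : ℕ, aa i ≤ aa (i + 1) := fun i => by linarith [hstep i, hw0]
    have hbounds : ∀ i : ℕ, i ≤ N → 0 ≤ aa i ∧ aa i ≤ L := by
      intro i hi
      constructor
      · exact mul_nonneg (Nat.cast_nonneg i) hw0.le
      · rw [← haaN, haa]
        apply mul_le_mul_of_nonneg_right _ hw0.le
        exact_mod_cast hi
    have hc1 : Continuous fun x => g x * h x (x / ε) :=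
      hgc.mul (hcont.comp (continuous_id.prodMk (continuous_id.div_const ε)))
    have hc2 : Continuous fun x => g x * hbar x := hgc.mul hbarc
    have hs1 := intervalIntegral.sum_integral_adjacent_intervals
      (a := aa) (n := N) (μ := volume) (f := fun x => g x * h x (x / ε))
      (fun i _ => hc1.intervalIntegrable _ _)
    have hs2 := intervalIntegral.sum_integral_adjacent_intervals
      (a := aa) (n := N) (μ := volume) (f := fun x => g x * hbar x)
      (fun i _ => hc2.intervalIntegrable _ _)
    rw [haa0, haaN] at hs1 hs2
    have hdiff : (∫ x in (0:ℝ)..L, g x * h x (x / ε)) - (∫ x in (0:ℝ)..L, g x * hbar x)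
        = ∑ i ∈ Finset.range N, ((∫ x in aa i..aa (i + 1), g x * h x (x / ε))
            - ∫ x in aa i..aa (i + 1), g x * hbar x) := by
      rw [Finset.sum_sub_distrib, hs1, hs2]
    set B : ℝ := 2 * (G * (M * w)) * w + ε * (2 * C) * (2 * G + G' * L) with hB
    have hterm : ∀ i ∈ Finset.range N,
        |(∫ x in aa i..aa (i + 1), g x * h x (x / ε))
          - ∫ x in aa i..aa (i + 1), g x * hbar x| ≤ B := by
      intro i hi
      rw [Finset.mem_range] at hi
      have h1 := key ε hε (aa i) (aa (i + 1)) (hbounds i hi.le).1 (hab i)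
        (hbounds (i + 1) hi).2
      rw [hstep i] at h1
      refine h1.trans ?_
      rw [hB]
      have : ε * (2 * C) * (2 * G + G' * w) ≤ ε * (2 * C) * (2 * G + G' * L) := by
        apply mul_le_mul_of_nonneg_left _ (by positivity)
        have : G' * w ≤ G' * L := mul_le_mul_of_nonneg_left hwL hG'0
        linarith
      linarith
    have hsum : |(∫ x in (0:ℝ)..L, g x * h x (x / ε))
        - ∫ x in (0:ℝ)..L, g x * hbar x| ≤ (N : ℝ) * B := by
      rw [hdiff]
      calc |∑ i ∈ Finset.range N, ((∫ x in aa i..aa (i + 1), g x * h x (x / ε))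
            - ∫ x in aa i..aa (i + 1), g x * hbar x)|
          ≤ ∑ i ∈ Finset.range N, |(∫ x in aa i..aa (i + 1), g x * h x (x / ε))
            - ∫ x in aa i..aa (i + 1), g x * hbar x| := Finset.abs_sum_le_sum_abs _ _
        _ ≤ ∑ _i ∈ Finset.range N, B := Finset.sum_le_sum hterm
        _ = (N : ℝ) * B := by rw [Finset.sum_const, Finset.card_range, nsmul_eq_mul]
    refine hsum.trans (le_of_eq ?_)
    rw [hB, hw]
    field_simp
  -- conclusion
  have htarget : (∫ x in (0:ℝ)..L, g x * ∫ y in (0:ℝ)..1, h x y)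
      = ∫ x in (0:ℝ)..L, g x * hbar x := by rw [hbar_def]
  rw [htarget, Metric.tendsto_nhdsWithin_nhds]
  intro δ hδ
  obtain ⟨N₀, hN₀⟩ := exists_nat_gt (2 * G * M * L ^ 2 / (δ / 2))
  set N : ℕ := N₀ + 1 with hNdef
  have hNpos : 0 < N := Nat.succ_pos _
  have hNR : (0:ℝ) < N := by exact_mod_cast hNpos
  have hN₀' : 2 * G * M * L ^ 2 / (δ / 2) < N := by
    refine hN₀.trans_le ?_
    exact_mod_cast Nat.le_succ N₀
  have hhalf : 2 * G * M * L ^ 2 / N < δ / 2 := by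
    rw [div_lt_iff₀ hNR]
    have h2 : 2 * G * M * L ^ 2 < δ / 2 * N := by
      rw [div_lt_iff₀ (by linarith : (0:ℝ) < δ / 2)] at hN₀'
      linarith
    linarith
  set D : ℝ := (N : ℝ) * ((2 * C) * (2 * G + G' * L)) with hD
  have hD0 : 0 ≤ D := by
    rw [hD]
    have : 0 ≤ G' * L := mul_nonneg hG'0 hL.le
    positivity
  refine ⟨(δ / 2) / (D + 1), by positivity, ?_⟩
  intro ε hεmem hεdist
  have hε : 0 < ε := hεmem
  rw [Real.dist_eq, sub_zero, abs_of_pos hε] at hεdist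
  rw [Real.dist_eq]
  have hglob := glob N hNpos ε hε
  have hεD : ε * D < δ / 2 := by
    calc ε * D ≤ ε * (D + 1) := by nlinarith
      _ < (δ / 2) / (D + 1) * (D + 1) := by
          apply mul_lt_mul_of_pos_right hεdist (by linarith)
      _ = δ / 2 := div_mul_cancel₀ _ (by linarith)
  calc |(∫ x in (0:ℝ)..L, g x * h x (x / ε)) - ∫ x in (0:ℝ)..L, g x * hbar x|
      ≤ 2 * G * M * L ^ 2 / N + ε * D := hglob
    _ < δ / 2 + δ / 2 := by linarith
    _ = δ := by ring
/-- In 1d the flux difference between the multiscale problem and the homogenized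
problem is the constant `c ε - c₀`, and it tends to `0` as `ε → 0⁺`. -/
theorem flux_convergence_one_dim (L : ℝ) (hL : 0 < L)
    (k : ℝ → ℝ → ℝ) (α β : ℝ) (hα : 0 < α)
    (hsmooth : ContDiff ℝ (⊤ : ℕ∞) fun q : ℝ × ℝ => k q.1 q.2)
    (hper : ∀ x y, k x (y + 1) = k x y)
    (hlb : ∀ x y, α ≤ k x y) (hub : ∀ x y, k x y ≤ β)
    (f F : ℝ → ℝ) (hf : Continuous f) (hF : ∀ x, HasDerivAt F (f x) x)
    (k₀ : ℝ → ℝ) (hk₀ : ∀ x, k₀ x = (∫ y in (0:ℝ)..1, (k x y)⁻¹)⁻¹)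
    (p p' : ℝ → ℝ → ℝ)
    (hp : ∀ ε > (0:ℝ), (∀ x, HasDerivAt (p ε) (p' ε x) x) ∧
      (∀ x, HasDerivAt (fun z => k z (z / ε) * p' ε z) (-f x) x) ∧
      p ε 0 = 0 ∧ p ε L = 0)
    (p₀ p₀' : ℝ → ℝ)
    (hp₀ : (∀ x, HasDerivAt p₀ (p₀' x) x) ∧
      (∀ x, HasDerivAt (fun z => k₀ z * p₀' z) (-f x) x) ∧ p₀ 0 = 0 ∧ p₀ L = 0)
    (c : ℝ → ℝ) (c₀ : ℝ)
    (hc : ∀ ε, c ε = (∫ z in (0:ℝ)..L, (k z (z / ε))⁻¹ * F z) /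
        ∫ z in (0:ℝ)..L, (k z (z / ε))⁻¹)
    (hc₀ : c₀ = (∫ z in (0:ℝ)..L, (k₀ z)⁻¹ * F z) / ∫ z in (0:ℝ)..L, (k₀ z)⁻¹) :
    (∀ ε > (0:ℝ), ∀ x ∈ Set.Icc (0:ℝ) L,
        |k x (x / ε) * p' ε x - k₀ x * p₀' x| = |c ε - c₀|) ∧
    Filter.Tendsto (fun ε => c ε - c₀) (nhdsWithin 0 (Set.Ioi 0)) (nhds 0) := by
  have hkpos : ∀ x y, 0 < k x y := fun x y => lt_of_lt_of_le hα (hlb x y)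
  have hkne : ∀ x y, k x y ≠ 0 := fun x y => (hkpos x y).ne'
  set h : ℝ → ℝ → ℝ := fun x y => (k x y)⁻¹ with hh
  have hcontk : Continuous fun q : ℝ × ℝ => k q.1 q.2 := hsmooth.continuous
  have hconth : Continuous fun q : ℝ × ℝ => h q.1 q.2 :=
    hcontk.inv₀ (fun q => hkne _ _)
  have hperh : ∀ x y, h x (y + 1) = h x y := by
    intro x y; simp only [hh, hper x y]
  have hhpos : ∀ x y, 0 < h x y := fun x y => inv_pos.mpr (hkpos x y)
  have hboundh : ∀ x y, |h x y| ≤ α⁻¹ := by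
    intro x y
    rw [abs_of_pos (hhpos x y)]
    exact inv_anti₀ hα (hlb x y)
  -- Lipschitz bound in the first variable
  have hCD : ContDiff ℝ (⊤ : ℕ∞) fun q : ℝ × ℝ => h q.1 q.2 :=
    hsmooth.inv (fun q => hkne _ _)
  have hdiffh : Differentiable ℝ fun q : ℝ × ℝ => h q.1 q.2 :=
    hCD.differentiable (by simp)
  have hfc : Continuous (fderiv ℝ fun q : ℝ × ℝ => h q.1 q.2) :=
    hCD.continuous_fderiv (by simp)
  obtain ⟨M₁, hM₁⟩ := ((isCompact_Icc (a := (0:ℝ)) (b := L)).prod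
    (isCompact_Icc (a := (0:ℝ)) (b := 1))).exists_bound_of_continuousOn
    hfc.continuousOn
  set M : ℝ := max M₁ 0 with hMdef
  have hM0 : 0 ≤ M := le_max_right _ _
  have hlipS : ∀ y ∈ Set.Icc (0:ℝ) 1, ∀ x ∈ Set.Icc (0:ℝ) L, ∀ x' ∈ Set.Icc (0:ℝ) L,
      |h x y - h x' y| ≤ M * |x - x'| := by
    intro y hy x hx x' hx'
    have key := Convex.norm_image_sub_le_of_norm_fderiv_le
      (f := fun q : ℝ × ℝ => h q.1 q.2) (𝕜 := ℝ)
      (s := Set.Icc (0:ℝ) L ×ˢ Set.Icc (0:ℝ) 1)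
      (C := M)
      (fun q _ => hdiffh q)
      (fun q hq => le_trans (hM₁ q hq) (le_max_left _ _))
      ((convex_Icc _ _).prod (convex_Icc _ _))
      (Set.mk_mem_prod hx' hy) (Set.mk_mem_prod hx hy)
    have hnorm : ‖((x, y) : ℝ × ℝ) - (x', y)‖ = |x - x'| := by
      have : ((x, y) : ℝ × ℝ) - (x', y) = (x - x', 0) := by
        simp [Prod.ext_iff]
      rw [this, Prod.norm_def]
      simp only [Real.norm_eq_abs, abs_zero]
      exact max_eq_left (abs_nonneg _)
    rw [hnorm] at key
    simpa [Real.norm_eq_abs] using key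
  have hliph : ∀ y : ℝ, ∀ x ∈ Set.Icc (0:ℝ) L, ∀ x' ∈ Set.Icc (0:ℝ) L,
      |h x y - h x' y| ≤ M * |x - x'| := by
    intro y x hx x' hx'
    have hfr : ∀ a : ℝ, h a (Int.fract y) = h a y := by
      intro a
      have hpa : Function.Periodic (h a) 1 := fun s => hperh a s
      have h5 := hpa.sub_int_mul_eq (x := y) ⌊y⌋
      rw [mul_one] at h5
      rw [← Int.self_sub_floor y]
      exact h5
    have hfry : Int.fract y ∈ Set.Icc (0:ℝ) 1 :=
      ⟨Int.fract_nonneg y, (Int.fract_lt_one y).le⟩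
    have := hlipS (Int.fract y) hfry x hx x' hx'
    rwa [hfr x, hfr x'] at this
  -- the homogenized coefficient
  have hslice : ∀ a : ℝ, Continuous (h a) := fun a =>
    hconth.comp (Continuous.prodMk_right a)
  have hintpos : ∀ x, 0 < ∫ y in (0:ℝ)..1, h x y := by
    intro x
    exact intervalIntegral.intervalIntegral_pos_of_pos_on
      ((hslice x).intervalIntegrable 0 1) (fun y _ => hhpos x y) one_pos
  have hk₀inv : ∀ x, (k₀ x)⁻¹ = ∫ y in (0:ℝ)..1, h x y := by
    intro x; rw [hk₀ x, inv_inv]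
  have hk₀lb : ∀ x, α ≤ k₀ x := by
    intro x
    have hle : (∫ y in (0:ℝ)..1, h x y) ≤ α⁻¹ := by
      have := intervalIntegral.integral_mono_on (a := 0) (b := 1)
        (μ := MeasureTheory.volume) zero_le_one ((hslice x).intervalIntegrable 0 1) intervalIntegrable_const
        (fun y _ => by
          have := hboundh x y
          rwa [abs_of_pos (hhpos x y)] at this)
      simpa using this
    rw [hk₀ x]
    have h6 := inv_anti₀ (hintpos x) hle
    rwa [inv_inv] at h6
  have hk₀c : Continuous k₀ := by
    have hunc : Continuous (Function.uncurry h) := hconth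
    have h1 : Continuous fun x => ∫ y in (0:ℝ)..1, h x y :=
      intervalIntegral.continuous_parametric_intervalIntegral_of_continuous' hunc 0 1
    have h2 : Continuous fun x => (∫ y in (0:ℝ)..1, h x y)⁻¹ :=
      h1.inv₀ (fun x => (hintpos x).ne')
    have h3 : k₀ = fun x => (∫ y in (0:ℝ)..1, h x y)⁻¹ := funext hk₀
    rw [h3]; exact h2
  -- flux formulas
  have hflux_ε : ∀ ε > (0:ℝ), ∀ x, k x (x / ε) * p' ε x = c ε - F x := by
    intro ε hε x
    obtain ⟨h1, h2, h3, h4⟩ := hp ε hε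
    have hKc : ContinuousOn (fun x => k x (x / ε)) (Set.Icc 0 L) :=
      (hcontk.comp (continuous_id.prodMk (continuous_id.div_const ε))).continuousOn
    have := aux_solve L hL (fun x => k x (x / ε)) α hα hKc (fun x => hlb x _)
      f F hF (p ε) (p' ε) h1 h2 h3 h4 x
    rw [hc ε]
    exact this
  have hflux_0 : ∀ x, k₀ x * p₀' x = c₀ - F x := by
    intro x
    obtain ⟨h1, h2, h3, h4⟩ := hp₀
    have := aux_solve L hL k₀ α hα hk₀c.continuousOn hk₀lb
      f F hF p₀ p₀' h1 h2 h3 h4 x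
    rw [hc₀]
    exact this
  constructor
  · intro ε hε x _
    rw [hflux_ε ε hε x, hflux_0 x]
    congr 1
    ring
  -- convergence
  · have hB := aux_twoscale L hL h M α⁻¹ hM0 (inv_nonneg.mpr hα.le) hconth hperh
      hboundh hliph (fun _ => 1) (fun _ => 0) (fun x => hasDerivAt_const x 1)
      continuous_const
    have hA := aux_twoscale L hL h M α⁻¹ hM0 (inv_nonneg.mpr hα.le) hconth hperh
      hboundh hliph F f hF hf
    -- rewrite the integrals appearing in c
    have hAeq : ∀ ε : ℝ, (∫ z in (0:ℝ)..L, (k z (z / ε))⁻¹ * F z)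
        = ∫ x in (0:ℝ)..L, F x * h x (x / ε) := by
      intro ε
      exact intervalIntegral.integral_congr (fun z _ => mul_comm _ _)
    have hBeq : ∀ ε : ℝ, (∫ z in (0:ℝ)..L, (k z (z / ε))⁻¹)
        = ∫ x in (0:ℝ)..L, (1:ℝ) * h x (x / ε) := by
      intro ε
      exact intervalIntegral.integral_congr (fun z _ => (one_mul _).symm)
    have hA₀eq : (∫ z in (0:ℝ)..L, (k₀ z)⁻¹ * F z)
        = ∫ x in (0:ℝ)..L, F x * ∫ y in (0:ℝ)..1, h x y := by
      apply intervalIntegral.integral_congr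
      intro z _
      dsimp only
      rw [hk₀inv z, mul_comm]
    have hB₀eq : (∫ z in (0:ℝ)..L, (k₀ z)⁻¹)
        = ∫ x in (0:ℝ)..L, (1:ℝ) * ∫ y in (0:ℝ)..1, h x y := by
      apply intervalIntegral.integral_congr
      intro z _
      dsimp only
      rw [hk₀inv z, one_mul]
    have hB₀pos : 0 < ∫ z in (0:ℝ)..L, (k₀ z)⁻¹ := by
      apply intervalIntegral.intervalIntegral_pos_of_pos_on
        ((hk₀c.inv₀ (fun x => (lt_of_lt_of_le hα (hk₀lb x)).ne')).intervalIntegrable 0 L)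
        (fun x _ => inv_pos.mpr (lt_of_lt_of_le hα (hk₀lb x))) hL
    have hAlim : Filter.Tendsto (fun ε => ∫ z in (0:ℝ)..L, (k z (z / ε))⁻¹ * F z)
        (nhdsWithin 0 (Set.Ioi 0)) (nhds (∫ z in (0:ℝ)..L, (k₀ z)⁻¹ * F z)) := by
      rw [hA₀eq]
      have heq : (fun ε => ∫ z in (0:ℝ)..L, (k z (z / ε))⁻¹ * F z)
          = fun ε => ∫ x in (0:ℝ)..L, F x * h x (x / ε) := funext hAeq
      rw [heq]
      exact hA
    have hBlim : Filter.Tendsto (fun ε => ∫ z in (0:ℝ)..L, (k z (z / ε))⁻¹)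
        (nhdsWithin 0 (Set.Ioi 0)) (nhds (∫ z in (0:ℝ)..L, (k₀ z)⁻¹)) := by
      rw [hB₀eq]
      have heq : (fun ε => ∫ z in (0:ℝ)..L, (k z (z / ε))⁻¹)
          = fun ε => ∫ x in (0:ℝ)..L, (1:ℝ) * h x (x / ε) := funext hBeq
      rw [heq]
      exact hB
    have htc : Filter.Tendsto c (nhdsWithin 0 (Set.Ioi 0)) (nhds c₀) := by
      have hdiv := Filter.Tendsto.div hAlim hBlim hB₀pos.ne'
      have hceq : c = fun ε => (∫ z in (0:ℝ)..L, (k z (z / ε))⁻¹ * F z) /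
          ∫ z in (0:ℝ)..L, (k z (z / ε))⁻¹ := funext hc
      rw [hceq, hc₀]
      exact hdiv
    have := htc.sub (tendsto_const_nhds (x := c₀))
    simpa using this
end
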